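/- The maximum loneliness of the four positive integer speeds 8, 1, 7, 15 equals 5/22; that is, ML(8, 1, 7, 15) = 5/22. -/

import Mathlib

/-! For integer speeds `dnn (t * v)` depends only on `dnn t ∈ [0, 1/2]`, by periodicity and
evenness. The interval `[0, 1/2]` is covered by eight intervals on each of which one of
`s, 8 s, 7 s, 15 s` is within `5/22` of a fixed integer (the ones for `7 s ≈ 2` and `15 s ≈ 5`
meet exactly at `s = 7/22`), so `ML ≤ 5/22`. At `t = 15/22` the four positions are
`5 + 10/22, 15/22, 4 + 17/22, 10 + 5/22`, all at distance at least `5/22` from `ℤ`. -/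

/-- `dnn x` is the distance from `x` to the nearest integer:
`dnn x = min_{m : ℤ} |x - m|`. -/
noncomputable def dnn (x : ℝ) : ℝ := ⨅ m : ℤ, |x - m|

/-- The maximum loneliness of speeds `v 0, …, v (n-1)`:
`ML v = sup_{t : ℝ} min_{i} dnn (t * v i)`. -/
noncomputable def ML {n : ℕ} (v : Fin n → ℝ) : ℝ := ⨆ t : ℝ, ⨅ i, dnn (t * v i)

open Set

lemma dnn_le_abs_sub (x : ℝ) (m : ℤ) : dnn x ≤ |x - m| :=
  ciInf_le ⟨0, forall_mem_range.2 fun _ => abs_nonneg _⟩ m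

lemma dnn_eq_abs_sub_round (x : ℝ) : dnn x = |x - round x| :=
  (dnn_le_abs_sub x (round x)).antisymm (le_ciInf (round_le x))

lemma dnn_nonneg (x : ℝ) : 0 ≤ dnn x := dnn_eq_abs_sub_round x ▸ abs_nonneg _

lemma dnn_le_half (x : ℝ) : dnn x ≤ 1 / 2 := dnn_eq_abs_sub_round x ▸ abs_sub_round x

lemma bddBelow_range_dnn {ι : Sort*} (f : ι → ℝ) : BddBelow (range fun i => dnn (f i)) :=
  ⟨0, forall_mem_range.2 fun _ => dnn_nonneg _⟩

lemma dnn_le_of_mem_Icc {x c : ℝ} (m : ℤ) (h : x ∈ Icc (m - c) (m + c)) : dnn x ≤ c :=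
  (dnn_le_abs_sub x m).trans (abs_sub_le_iff.2 ⟨by linarith [h.2], by linarith [h.1]⟩)

lemma le_dnn_of_mem_Icc {x c : ℝ} (k : ℤ) (h : x ∈ Icc (k + c) (k + 1 - c)) : c ≤ dnn x := by
  refine le_ciInf fun m => ?_
  rcases le_or_gt m k with hm | hm
  · have : (m : ℝ) ≤ k := by exact_mod_cast hm
    exact le_abs.2 (Or.inl (by linarith [h.1]))
  · have : (k : ℝ) + 1 ≤ m := by exact_mod_cast hm
    exact le_abs.2 (Or.inr (by linarith [h.2]))

lemma dnn_add_intCast (x : ℝ) (k : ℤ) : dnn (x + k) = dnn x := by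
  rw [dnn, ← (Equiv.addRight k).surjective.iInf_comp]
  simp [dnn]

lemma dnn_neg (x : ℝ) : dnn (-x) = dnn x := by
  rw [dnn, ← neg_surjective.iInf_comp]
  congr 1 with m
  rw [← abs_neg]
  push_cast
  ring_nf

lemma dnn_mul_intCast (t : ℝ) (n : ℤ) : dnn (t * n) = dnn (dnn t * n) := by
  have : t * n = (t - round t) * n + ((round t * n : ℤ) : ℝ) := by push_cast; ring
  rw [this, dnn_add_intCast, dnn_eq_abs_sub_round t]
  rcases abs_choice (t - round t) with h | h <;> rw [h]
  rw [neg_mul, dnn_neg]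

lemma le_ML {n : ℕ} [NeZero n] {v : Fin n → ℝ} {c : ℝ} (t : ℝ) (h : ∀ i, c ≤ dnn (t * v i)) :
    c ≤ ML v :=
  le_ciSup_of_le ⟨1 / 2, forall_mem_range.2 fun _ => (ciInf_le (bddBelow_range_dnn _) 0).trans
    (dnn_le_half _)⟩ t (le_ciInf h)

lemma ML_le {n : ℕ} {v : Fin n → ℝ} {c : ℝ} (h : ∀ t, ∃ i, dnn (t * v i) ≤ c) : ML v ≤ c :=
  ciSup_le fun t => (h t).elim fun i hi => (ciInf_le (bddBelow_range_dnn _) i).trans hi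

lemma ML_le_of_forall_mem_Icc {n : ℕ} {v : Fin n → ℝ} {c : ℝ} (hv : ∀ i, ∃ k : ℤ, v i = k)
    (h : ∀ s ∈ Icc (0 : ℝ) (1 / 2), ∃ i, dnn (s * v i) ≤ c) : ML v ≤ c := by
  choose k hk using hv
  refine ML_le fun t => ?_
  simp only [hk, dnn_mul_intCast t]
  simpa only [hk] using h _ ⟨dnn_nonneg t, dnn_le_half t⟩

lemma dnn_mul_le_of_mem_Icc {s c : ℝ} (v : ℝ) (m : ℤ) (hv : 0 < v)
    (h : s ∈ Icc ((m - c) / v) ((m + c) / v)) : dnn (s * v) ≤ c := by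
  rw [mem_Icc, div_le_iff₀ hv, le_div_iff₀ hv] at h
  exact dnn_le_of_mem_Icc m h

lemma exists_dnn_mul_le_five_div_22 {s : ℝ} (hs : s ∈ Icc (0 : ℝ) (1 / 2)) :
    ∃ i, dnn (s * ![(8 : ℝ), 1, 7, 15] i) ≤ 5 / 22 := by
  obtain ⟨h0, h1⟩ := hs
  rcases le_or_gt s (5 / 22) with hle | h
  · exact ⟨1, dnn_mul_le_of_mem_Icc 1 0 (by norm_num) (by constructor <;> norm_num <;> linarith)⟩
  rcases le_or_gt s (49 / 176) with hle | h
  · exact ⟨0, dnn_mul_le_of_mem_Icc 8 2 (by norm_num) (by constructor <;> norm_num <;> linarith)⟩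
  rcases le_or_gt s (7 / 22) with hle | h
  · exact ⟨2, dnn_mul_le_of_mem_Icc 7 2 (by norm_num) (by constructor <;> norm_num <;> linarith)⟩
  rcases le_or_gt s (23 / 66) with hle | h
  · exact ⟨3, dnn_mul_le_of_mem_Icc 15 5 (by norm_num) (by constructor <;> norm_num <;> linarith)⟩
  rcases le_or_gt s (71 / 176) with hle | h
  · exact ⟨0, dnn_mul_le_of_mem_Icc 8 3 (by norm_num) (by constructor <;> norm_num <;> linarith)⟩
  rcases le_or_gt s (71 / 154) with hle | h
  · exact ⟨2, dnn_mul_le_of_mem_Icc 7 3 (by norm_num) (by constructor <;> norm_num <;> linarith)⟩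
  rcases le_or_gt s (53 / 110) with hle | h
  · exact ⟨3, dnn_mul_le_of_mem_Icc 15 7 (by norm_num) (by constructor <;> norm_num <;> linarith)⟩
  · exact ⟨0, dnn_mul_le_of_mem_Icc 8 4 (by norm_num) (by constructor <;> norm_num <;> linarith)⟩

theorem stmt_17 : ML ![(8 : ℝ), 1, 7, 15] = 5 / 22 := by
  refine le_antisymm ?_ (le_ML (15 / 22) fun i => ?_)
  · refine ML_le_of_forall_mem_Icc (fun i => ?_) fun s => exists_dnn_mul_le_five_div_22
    fin_cases i
    exacts [⟨8, by simp⟩, ⟨1, by simp⟩, ⟨7, by simp⟩, ⟨15, by simp⟩]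
  · fin_cases i
    · exact le_dnn_of_mem_Icc 5 ⟨by norm_num, by norm_num⟩
    · exact le_dnn_of_mem_Icc 0 ⟨by norm_num, by norm_num⟩
    · exact le_dnn_of_mem_Icc 4 ⟨by norm_num, by norm_num⟩
    · exact le_dnn_of_mem_Icc 10 ⟨by norm_num, by norm_num⟩
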